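/- arXiv:math/0008199 — 3 statements merged into one kernel-verified Lean document; each statement's English description precedes it below -/
import Mathlib

section
/- Let V be any linear operator on symmetric functions and define Ṽ by (Ṽ P)[X] = (V acting in the Y variables applied to P[qX + (1−q)Y]) evaluated at Y = X. Then Ṽ applied to the kernel Ω[XY(1−t)/(1−q)] satisfies: (Ṽ Ω[XY(1−t)/(1−q)]) / Ω[XY(1−t)/(1−q)] = (V Ω[XY(1−t)]) / Ω[XY(1−t)]; in particular this ratio is independent of q. -/
open MvPolynomial

noncomputable section

variable {F : Type} [Field F] [CharZero F]

/-- `OmCoeff c n` is h_n[X·c], the coefficient of y^n in Ω[X y c], where the symmetric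
function algebra Λ is ℚ(q,t)[p₁,p₂,…] and c is the multiplier c_m on p_m (e.g.
c_m = (1−t^m)/(1−q^m) for the alphabet X(1−t)/(1−q)).  It is defined by the Newton
recursion (n+1)·H_{n+1} = ∑_{m=1}^{n+1} c_m p_m H_{n+1−m}, which is equivalent to
Ω[Xyc] = exp(∑_m c_m p_m y^m / m). -/
def OmCoeff (c : ℕ+ → F) : ℕ → MvPolynomial ℕ+ F
  | 0 => 1
  | n + 1 =>
      (((n : F) + 1)⁻¹) •
        ∑ m ∈ Finset.range (n + 1),
          (C (c ⟨m + 1, Nat.succ_pos m⟩) * X ⟨m + 1, Nat.succ_pos m⟩)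
            * OmCoeff c (n - m)
  decreasing_by exact Nat.lt_succ_of_le (Nat.sub_le n m)

/-- The kernel Ω[X·Y·c] as a power series in the alphabet Y = (y_i)_{i : υ} with
coefficients in Λ: the coefficient of y^d is ∏_i h_{d_i}[X·c]. -/
def OmKernel (c : ℕ+ → F) (υ : Type) : MvPowerSeries υ (MvPolynomial ℕ+ F) :=
  fun d => ∏ i ∈ d.support, OmCoeff c (d i)

/-- Apply an operator on Λ coefficientwise to a kernel. -/
def mapCoeffs {υ : Type} (W : MvPolynomial ℕ+ F → MvPolynomial ℕ+ F)
    (Φ : MvPowerSeries υ (MvPolynomial ℕ+ F)) : MvPowerSeries υ (MvPolynomial ℕ+ F) :=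
  fun d => W (Φ d)

/-- The plethystic substitution P ↦ P[qX + (1−q)Y], i.e. p_k ↦ q^k p_k[X] + (1−q^k) p_k[Y],
where the X-power sums are the `Sum.inl` variables and the Y-power sums are `Sum.inr`. -/
def qsub (q : F) : MvPolynomial ℕ+ F →ₐ[F] MvPolynomial (ℕ+ ⊕ ℕ+) F :=
  aeval (fun k : ℕ+ => C (q ^ (k : ℕ)) * X (Sum.inl k) + C (1 - q ^ (k : ℕ)) * X (Sum.inr k))

/-- Setting Y = X, i.e. p_k[Y] ↦ p_k[X]. -/
def setY : MvPolynomial (ℕ+ ⊕ ℕ+) F →ₐ[F] MvPolynomial ℕ+ F :=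
  aeval (Sum.elim X X)

/-! ### Auxiliary machinery -/

set_option linter.unusedSectionVars false
set_option linter.unusedTactic false

/-- Generalized Newton-recursion sequence in any `F`-algebra. -/
def auxH (F : Type) [Field F] {R : Type} [CommRing R] [Algebra F R] (p : ℕ+ → R) : ℕ → R
  | 0 => 1
  | n + 1 =>
      (((n : F) + 1)⁻¹) •
        ∑ m ∈ Finset.range (n + 1),
          p ⟨m + 1, Nat.succ_pos m⟩ * auxH F p (n - m)
  decreasing_by exact Nat.lt_succ_of_le (Nat.sub_le n m)

section Aux

variable {R : Type} [CommRing R] [Algebra F R]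

lemma auxH_zero (p : ℕ+ → R) : auxH F p 0 = 1 := by rw [auxH]

lemma auxH_succ_smul (p : ℕ+ → R) (n : ℕ) :
    ((n : F) + 1) • auxH F p (n + 1)
      = ∑ m ∈ Finset.range (n + 1), p ⟨m + 1, Nat.succ_pos m⟩ * auxH F p (n - m) := by
  rw [auxH]
  exact smul_inv_smul₀ (by exact_mod_cast (Nat.succ_ne_zero n)) _

lemma map_auxH {S : Type} [CommRing S] [Algebra F S] (φ : R →ₐ[F] S) (p : ℕ+ → R) :
    ∀ n, φ (auxH F p n) = auxH F (fun m => φ (p m)) n := by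
  intro n
  induction n using Nat.strong_induction_on with
  | _ n ih =>
    match n with
    | 0 => rw [auxH_zero, auxH_zero, map_one]
    | n + 1 =>
      rw [auxH, auxH, map_smul, map_sum]
      congr 1
      refine Finset.sum_congr rfl fun m hm => ?_
      rw [map_mul, ih (n - m) (Nat.lt_succ_of_le (Nat.sub_le n m))]

lemma coeff_mk_mul (f g : ℕ → R) (n : ℕ) :
    (PowerSeries.coeff n) (PowerSeries.mk f * PowerSeries.mk g)
      = ∑ m ∈ Finset.range (n + 1), f m * g (n - m) := by
  rw [PowerSeries.coeff_mul, Finset.Nat.sum_antidiagonal_eq_sum_range_succ_mk]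
  simp [PowerSeries.coeff_mk]

lemma smul_eq_natCast_mul (n : ℕ) (x : R) : ((n : F) + 1) • x = ((n : R) + 1) * x := by
  rw [Algebra.smul_def, map_add, map_one, map_natCast]

lemma derivativeFun_eq' {S : Type} [CommRing S] (f : PowerSeries S) :
    f.derivativeFun = PowerSeries.derivative S f := rfl

lemma deriv_auxG (p : ℕ+ → R) :
    (PowerSeries.mk (auxH F p)).derivativeFun
      = PowerSeries.mk (fun m => p ⟨m + 1, Nat.succ_pos m⟩) * PowerSeries.mk (auxH F p) := by
  ext n
  rw [derivativeFun_eq', PowerSeries.coeff_derivative, coeff_mk_mul, PowerSeries.coeff_mk,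
    ← auxH_succ_smul (F := F), smul_eq_natCast_mul]
  push_cast
  ring

lemma ode_unique {F R : Type} [Field F] [CharZero F] [CommRing R] [Algebra F R]
    (M f g : PowerSeries R)
    (hf : f.derivativeFun = M * f) (hg : g.derivativeFun = M * g)
    (h0 : PowerSeries.coeff 0 f = PowerSeries.coeff 0 g) : f = g := by
  ext n
  induction n using Nat.strong_induction_on with
  | _ n ih =>
    match n with
    | 0 => exact h0
    | n + 1 =>
      have hfc := congrArg (PowerSeries.coeff n) hf
      have hgc := congrArg (PowerSeries.coeff n) hg
      rw [derivativeFun_eq', PowerSeries.coeff_derivative, PowerSeries.coeff_mul,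
        Finset.Nat.sum_antidiagonal_eq_sum_range_succ_mk] at hfc hgc
      have hsum : ∑ m ∈ Finset.range (n + 1),
            (PowerSeries.coeff m) M * (PowerSeries.coeff (n - m)) f
          = ∑ m ∈ Finset.range (n + 1),
            (PowerSeries.coeff m) M * (PowerSeries.coeff (n - m)) g := by
        refine Finset.sum_congr rfl fun m hm => ?_
        rw [ih (n - m) (Nat.lt_succ_of_le (Nat.sub_le n m))]
      have h2 : ((n : F) + 1) • (PowerSeries.coeff (n + 1)) f
          = ((n : F) + 1) • (PowerSeries.coeff (n + 1)) g := by
        rw [smul_eq_natCast_mul, smul_eq_natCast_mul, mul_comm, mul_comm ((n : R) + 1)]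
        push_cast at hfc hgc ⊢
        rw [hfc, hgc, hsum]
      have hne : ((n : F) + 1) ≠ 0 := by exact_mod_cast (Nat.succ_ne_zero n)
      have := congrArg (fun z => ((n : F) + 1)⁻¹ • z) h2
      simpa [inv_smul_smul₀ hne] using this

lemma auxH_conv (p p' pc : ℕ+ → R) (hpc : ∀ m, pc m = p m + p' m) (n : ℕ) :
    auxH F pc n = ∑ j ∈ Finset.range (n + 1), auxH F p j * auxH F p' (n - j) := by
  have hpc' : pc = fun m => p m + p' m := funext hpc
  subst hpc'
  have key : PowerSeries.mk (auxH F p) * PowerSeries.mk (auxH F p')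
      = PowerSeries.mk (auxH F (fun m => p m + p' m)) := by
    apply ode_unique (F := F) (PowerSeries.mk (fun m => p ⟨m + 1, Nat.succ_pos m⟩)
      + PowerSeries.mk (fun m => p' ⟨m + 1, Nat.succ_pos m⟩))
    · rw [PowerSeries.derivativeFun_mul, deriv_auxG, deriv_auxG]
      simp only [smul_eq_mul]
      ring
    · rw [deriv_auxG]
      have : (PowerSeries.mk (fun m : ℕ =>
            (fun m : ℕ+ => p m + p' m) ⟨m + 1, Nat.succ_pos m⟩) : PowerSeries R)
          = PowerSeries.mk (fun m => p ⟨m + 1, Nat.succ_pos m⟩)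
            + PowerSeries.mk (fun m => p' ⟨m + 1, Nat.succ_pos m⟩) := by
        ext k
        simp [PowerSeries.coeff_mk]
      rw [this]
    · rw [coeff_mk_mul]
      simp [auxH_zero]
  have := congrArg (PowerSeries.coeff n) key
  rw [coeff_mk_mul, PowerSeries.coeff_mk] at this
  exact this.symm

end Aux

section Comb

variable {R υ : Type} [CommRing R] [DecidableEq υ]

lemma supp_left_subset {p q e : υ →₀ ℕ} (h : p + q = e) : p.support ⊆ e.support := by
  intro i hi
  rw [Finsupp.mem_support_iff] at hi ⊢
  have := DFunLike.congr_fun h i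
  rw [Finsupp.add_apply] at this
  omega

lemma prod_conv (A B : ℕ → R) (s : Finset υ) :
    ∀ e : υ →₀ ℕ, e.support ⊆ s →
      ∏ i ∈ s, ∑ j ∈ Finset.range (e i + 1), A j * B (e i - j)
        = ∑ pq ∈ Finset.HasAntidiagonal.antidiagonal e, ∏ i ∈ s, (A (pq.1 i) * B (pq.2 i)) := by
  induction s using Finset.induction with
  | empty =>
    intro e he
    have he0 : e = 0 := by
      ext i
      by_contra h
      exact absurd (he (Finsupp.mem_support_iff.mpr h)) (Finset.notMem_empty i)
    subst he0
    simp [Finsupp.antidiagonal_zero]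
  | @insert x s' hx ih =>
    intro e he
    have hes : (e.erase x).support ⊆ s' := by
      intro i hi
      rw [Finsupp.support_erase, Finset.mem_erase] at hi
      rcases Finset.mem_insert.mp (he hi.2) with h | h
      · exact absurd h hi.1
      · exact h
    rw [Finset.prod_insert hx]
    have hprod : ∏ i ∈ s', ∑ j ∈ Finset.range (e i + 1), A j * B (e i - j)
        = ∑ pq ∈ Finset.HasAntidiagonal.antidiagonal (e.erase x), ∏ i ∈ s', (A (pq.1 i) * B (pq.2 i)) := by
      calc ∏ i ∈ s', ∑ j ∈ Finset.range (e i + 1), A j * B (e i - j)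
          = ∏ i ∈ s', ∑ j ∈ Finset.range ((e.erase x) i + 1), A j * B ((e.erase x) i - j) :=
            Finset.prod_congr rfl (fun i hi => by
              rw [Finsupp.erase_ne (ne_of_mem_of_not_mem hi hx)])
        _ = _ := ih _ hes
    rw [hprod, Finset.sum_mul_sum, ← Finset.sum_product']
    refine Finset.sum_nbij'
      (fun a => (a.2.1 + Finsupp.single x a.1, a.2.2 + Finsupp.single x (e x - a.1)))
      (fun b => (b.1 x, (b.1.erase x, b.2.erase x))) ?_ ?_ ?_ ?_ ?_
    · rintro ⟨j, p, qq⟩ ha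
      dsimp only
      rw [Finset.mem_product, Finset.mem_range] at ha
      have hj : j ≤ e x := Nat.lt_succ_iff.mp ha.1
      have hpq : p + qq = e.erase x := Finset.HasAntidiagonal.mem_antidiagonal.mp ha.2
      rw [Finset.HasAntidiagonal.mem_antidiagonal]
      have : (p + Finsupp.single x j) + (qq + Finsupp.single x (e x - j))
          = (p + qq) + (Finsupp.single x j + Finsupp.single x (e x - j)) :=
        add_add_add_comm p (Finsupp.single x j) qq (Finsupp.single x (e x - j))
      rw [this, hpq, ← Finsupp.single_add, Nat.add_sub_cancel' hj,
        Finsupp.erase_add_single]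
    · rintro ⟨P, Q⟩ hb
      dsimp only
      rw [Finset.HasAntidiagonal.mem_antidiagonal] at hb
      have hPx : P x + Q x = e x := by
        have := DFunLike.congr_fun hb x
        rwa [Finsupp.add_apply] at this
      rw [Finset.mem_product, Finset.mem_range, Finset.HasAntidiagonal.mem_antidiagonal]
      exact ⟨Nat.lt_succ_of_le (by omega), by rw [← Finsupp.erase_add, hb]⟩
    · rintro ⟨j, p, qq⟩ ha
      dsimp only
      rw [Finset.mem_product, Finset.mem_range] at ha
      have hpq : p + qq = e.erase x := Finset.HasAntidiagonal.mem_antidiagonal.mp ha.2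
      have hx0 : p x = 0 ∧ qq x = 0 := by
        have := DFunLike.congr_fun hpq x
        rw [Finsupp.add_apply, Finsupp.erase_same] at this
        omega
      have hp : (p + Finsupp.single x j) x = j := by
        rw [Finsupp.add_apply, Finsupp.single_eq_same, hx0.1, zero_add]
      have hep : (p + Finsupp.single x j).erase x = p := by
        rw [Finsupp.erase_add, Finsupp.erase_single, add_zero,
          Finsupp.erase_of_notMem_support (Finsupp.notMem_support_iff.mpr hx0.1)]
      have heq : (qq + Finsupp.single x (e x - j)).erase x = qq := by
        rw [Finsupp.erase_add, Finsupp.erase_single, add_zero,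
          Finsupp.erase_of_notMem_support (Finsupp.notMem_support_iff.mpr hx0.2)]
      simp only [hp, hep, heq]
    · rintro ⟨P, Q⟩ hb
      dsimp only
      rw [Finset.HasAntidiagonal.mem_antidiagonal] at hb
      have hPx : P x + Q x = e x := by
        have := DFunLike.congr_fun hb x
        rwa [Finsupp.add_apply] at this
      have h1 : (e x - P x) = Q x := by omega
      simp only [h1, Finsupp.erase_add_single]
    · rintro ⟨j, p, qq⟩ ha
      dsimp only
      rw [Finset.mem_product, Finset.mem_range] at ha
      have hpq : p + qq = e.erase x := Finset.HasAntidiagonal.mem_antidiagonal.mp ha.2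
      have hx0 : p x = 0 ∧ qq x = 0 := by
        have := DFunLike.congr_fun hpq x
        rw [Finsupp.add_apply, Finsupp.erase_same] at this
        omega
      rw [Finset.prod_insert hx]
      have h1 : (p + Finsupp.single x j) x = j := by
        rw [Finsupp.add_apply, Finsupp.single_eq_same, hx0.1, zero_add]
      have h2 : (qq + Finsupp.single x (e x - j)) x = e x - j := by
        rw [Finsupp.add_apply, Finsupp.single_eq_same, hx0.2, zero_add]
      rw [h1, h2]
      congr 1
      refine Finset.prod_congr rfl fun i hi => ?_
      have hne : i ≠ x := ne_of_mem_of_not_mem hi hx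
      rw [Finsupp.add_apply, Finsupp.add_apply, Finsupp.single_eq_of_ne hne,
        Finsupp.single_eq_of_ne hne, add_zero, add_zero]

lemma prod_support_extend (A : ℕ → R) (hA : A 0 = 1) {p : υ →₀ ℕ} {s : Finset υ}
    (h : p.support ⊆ s) : ∏ i ∈ p.support, A (p i) = ∏ i ∈ s, A (p i) :=
  Finset.prod_subset h (fun i _ hi => by rw [Finsupp.notMem_support_iff.mp hi, hA])

lemma kernel_conv (A B Cc : ℕ → R) (hA : A 0 = 1) (hB : B 0 = 1)
    (h : ∀ n, Cc n = ∑ j ∈ Finset.range (n + 1), A j * B (n - j)) (e : υ →₀ ℕ) :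
    ∏ i ∈ e.support, Cc (e i)
      = ∑ pq ∈ Finset.HasAntidiagonal.antidiagonal e,
          (∏ i ∈ pq.1.support, A (pq.1 i)) * (∏ i ∈ pq.2.support, B (pq.2 i)) := by
  rw [Finset.prod_congr rfl (fun i _ => h (e i)), prod_conv A B e.support e subset_rfl]
  refine Finset.sum_congr rfl fun pq hpq => ?_
  have hm := Finset.HasAntidiagonal.mem_antidiagonal.mp hpq
  have hm' : pq.2 + pq.1 = e := by rw [add_comm]; exact hm
  rw [Finset.prod_mul_distrib, prod_support_extend A hA (supp_left_subset hm),
    prod_support_extend B hB (supp_left_subset hm')]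

end Comb

lemma OmCoeff_eq_auxH (c : ℕ+ → F) :
    ∀ n, OmCoeff c n = auxH F (fun m => (C (c m) * X m : MvPolynomial ℕ+ F)) n := by
  intro n
  induction n using Nat.strong_induction_on with
  | _ n ih =>
    match n with
    | 0 => rw [OmCoeff, auxH]
    | n + 1 =>
      rw [OmCoeff, auxH]
      congr 1
      refine Finset.sum_congr rfl fun m hm => ?_
      rw [ih (n - m) (Nat.lt_succ_of_le (Nat.sub_le n m))]

lemma OmCoeff_zero (c : ℕ+ → F) : OmCoeff c 0 = 1 := by rw [OmCoeff]

lemma setY_renameL (f : MvPolynomial ℕ+ F) : setY (rename Sum.inl f) = f := by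
  show aeval (Sum.elim X X) (rename Sum.inl f) = f
  rw [aeval_rename, Sum.elim_comp_inl, aeval_X_left_apply]

lemma setY_renameR (f : MvPolynomial ℕ+ F) : setY (rename Sum.inr f) = f := by
  show aeval (Sum.elim X X) (rename Sum.inr f) = f
  rw [aeval_rename, Sum.elim_comp_inr, aeval_X_left_apply]

/-- Proposition 1.1: for a linear operator V on Λ with Y-lift VY
(characterized by VY(f[X]·g[Y]) = f[X]·V(g)[Y]), the twisted operator
Ṽ P = V^Y P[qX+(1−q)Y]|_{Y=X} satisfies
(Ṽ Ω[XY(1−t)/(1−q)]) / Ω[XY(1−t)/(1−q)] = (V Ω[XY(1−t)]) / Ω[XY(1−t)];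
stated in cross-multiplied form (the denominators are invertible power series),
in particular the ratio is independent of q. -/
theorem stmt_5 (q t : F) (hq : ∀ n : ℕ, n ≠ 0 → (1 : F) - q ^ n ≠ 0)
    (V : MvPolynomial ℕ+ F →ₗ[F] MvPolynomial ℕ+ F)
    (VY : MvPolynomial (ℕ+ ⊕ ℕ+) F →ₗ[F] MvPolynomial (ℕ+ ⊕ ℕ+) F)
    (hVY : ∀ f g : MvPolynomial ℕ+ F,
      VY (rename Sum.inl f * rename Sum.inr g)
        = rename Sum.inl f * rename Sum.inr (V g))
    (υ : Type) :
    mapCoeffs (fun P => setY (VY (qsub q P)))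
        (OmKernel (fun m : ℕ+ => (1 - t ^ (m : ℕ)) / (1 - q ^ (m : ℕ))) υ)
      * OmKernel (fun m : ℕ+ => 1 - t ^ (m : ℕ)) υ
    = mapCoeffs (fun P => V P) (OmKernel (fun m : ℕ+ => 1 - t ^ (m : ℕ)) υ)
      * OmKernel (fun m : ℕ+ => (1 - t ^ (m : ℕ)) / (1 - q ^ (m : ℕ))) υ := by
  classical
  set c : ℕ+ → F := fun m : ℕ+ => (1 - t ^ (m : ℕ)) / (1 - q ^ (m : ℕ)) with hc
  set c' : ℕ+ → F := fun m : ℕ+ => 1 - t ^ (m : ℕ) with hc'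
  set a : ℕ+ → F := fun m : ℕ+ => q ^ (m : ℕ) * c m with ha
  have hqm : ∀ m : ℕ+, (1 : F) - q ^ (m : ℕ) ≠ 0 := fun m => hq (m : ℕ) m.pos.ne'
  have hmul : ∀ m : ℕ+, c m * (1 - q ^ (m : ℕ)) = c' m := fun m => div_mul_cancel₀ _ (hqm m)
  have hsum : ∀ m : ℕ+, c m = a m + c' m := by
    intro m
    rw [ha, ← hmul m]
    ring
  have om_split : ∀ n, OmCoeff c n
      = ∑ j ∈ Finset.range (n + 1), OmCoeff a j * OmCoeff c' (n - j) := by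
    intro n
    rw [OmCoeff_eq_auxH,
      auxH_conv (fun m => (C (a m) * X m : MvPolynomial ℕ+ F))
        (fun m => C (c' m) * X m) _
        (fun m => by rw [← add_mul, ← C_add, ← hsum m])]
    exact Finset.sum_congr rfl fun j hj => by
      rw [OmCoeff_eq_auxH a, OmCoeff_eq_auxH c']
  have qsub_split : ∀ n, qsub q (OmCoeff c n)
      = ∑ j ∈ Finset.range (n + 1),
          rename Sum.inl (OmCoeff a j) * rename Sum.inr (OmCoeff c' (n - j)) := by
    intro n
    rw [OmCoeff_eq_auxH, map_auxH (qsub q),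
      auxH_conv (fun m => (C (a m) * X (Sum.inl m) : MvPolynomial (ℕ+ ⊕ ℕ+) F))
        (fun m => C (c' m) * X (Sum.inr m)) _ ?hpc]
    · refine Finset.sum_congr rfl fun j hj => ?_
      congr 1
      · rw [OmCoeff_eq_auxH a, map_auxH (rename Sum.inl)]
        congr 1
        funext m
        conv_rhs => rw [map_mul, rename_C, rename_X]
      · rw [OmCoeff_eq_auxH c', map_auxH (rename Sum.inr)]
        congr 1
        funext m
        conv_rhs => rw [map_mul, rename_C, rename_X]
    case hpc =>
      intro m
      have h1 : qsub q (C (c m)) = C (c m) := by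
        show aeval _ (C (c m)) = _
        rw [aeval_C, algebraMap_eq]
      have h2 : qsub q (X m)
          = C (q ^ (m : ℕ)) * X (Sum.inl m) + C (1 - q ^ (m : ℕ)) * X (Sum.inr m) := by
        show aeval _ (X m) = _
        rw [aeval_X]
      rw [map_mul, h1, h2]
      simp only [ha]
      rw [← hmul m, C_mul, C_mul]
      ring
  have Ksplit : ∀ e : υ →₀ ℕ, (∏ i ∈ e.support, OmCoeff c (e i))
      = ∑ pq ∈ Finset.HasAntidiagonal.antidiagonal e,
          (∏ i ∈ pq.1.support, OmCoeff a (pq.1 i))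
            * (∏ i ∈ pq.2.support, OmCoeff c' (pq.2 i)) :=
    fun e => kernel_conv _ _ _ (OmCoeff_zero a) (OmCoeff_zero c') om_split e
  have Wsplit : ∀ e : υ →₀ ℕ, setY (VY (qsub q (∏ i ∈ e.support, OmCoeff c (e i))))
      = ∑ pq ∈ Finset.HasAntidiagonal.antidiagonal e,
          (∏ i ∈ pq.1.support, OmCoeff a (pq.1 i))
            * V (∏ i ∈ pq.2.support, OmCoeff c' (pq.2 i)) := by
    intro e
    have h1 : qsub q (∏ i ∈ e.support, OmCoeff c (e i))
        = ∑ pq ∈ Finset.HasAntidiagonal.antidiagonal e,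
            rename Sum.inl (∏ i ∈ pq.1.support, OmCoeff a (pq.1 i))
              * rename Sum.inr (∏ i ∈ pq.2.support, OmCoeff c' (pq.2 i)) := by
      rw [map_prod,
        kernel_conv (fun j => (rename Sum.inl (OmCoeff a j) : MvPolynomial (ℕ+ ⊕ ℕ+) F))
          (fun j => rename Sum.inr (OmCoeff c' j)) (fun n => qsub q (OmCoeff c n))
          (by show (rename Sum.inl) (OmCoeff a 0) = 1; rw [OmCoeff_zero, map_one])
          (by show (rename Sum.inr) (OmCoeff c' 0) = 1; rw [OmCoeff_zero, map_one])
          qsub_split e]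
      exact Finset.sum_congr rfl fun pq _ => by rw [map_prod, map_prod]
    rw [h1, map_sum, map_sum]
    refine Finset.sum_congr rfl fun pq _ => ?_
    rw [hVY, map_mul, setY_renameL, setY_renameR]
  have E2 : OmKernel c υ = OmKernel a υ * OmKernel c' υ := by
    apply MvPowerSeries.ext
    intro d
    rw [MvPowerSeries.coeff_mul]
    simp only [MvPowerSeries.coeff_apply, OmKernel]
    exact Ksplit d
  have E1 : mapCoeffs (fun P => setY (VY (qsub q P))) (OmKernel c υ)
      = OmKernel a υ * mapCoeffs (fun P => V P) (OmKernel c' υ) := by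
    apply MvPowerSeries.ext
    intro d
    rw [MvPowerSeries.coeff_mul]
    simp only [MvPowerSeries.coeff_apply, mapCoeffs, OmKernel]
    exact Wsplit d
  rw [E1, E2]
  ring

end
end

section
/- For any linear operator V on symmetric functions, conjugation by the plethystic substitution F^t (sending P[X] to P[X(1−t)]) commutes with the q-twisting operation V ↦ Ṽ: namely F^t ∘ Ṽ ∘ (F^t)^{-1} = (F^t ∘ V ∘ (F^t)^{-1})~, where (Ṽ P)[X] = V^Y P[qX+(1−q)Y] |_{Y=X}. -/
open MvPolynomial

noncomputable section

variable {F : Type} [Field F]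

def scaleX (a : ℕ+ → F) : MvPolynomial ℕ+ F →ₐ[F] MvPolynomial ℕ+ F :=
  aeval (fun k => C (a k) * X k)

def twoScale (a b : ℕ+ → F) : MvPolynomial (ℕ+ ⊕ ℕ+) F →ₐ[F] MvPolynomial (ℕ+ ⊕ ℕ+) F :=
  aeval (Sum.elim (fun k => C (a k) * X (Sum.inl k)) (fun k => C (b k) * X (Sum.inr k)))

lemma scaleX_comp (a b : ℕ+ → F) (f : MvPolynomial ℕ+ F) :
    scaleX a (scaleX b f) = scaleX (fun k => a k * b k) f := by
  have h : (scaleX a).comp (scaleX b) = scaleX (F := F) (fun k => a k * b k) :=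
    MvPolynomial.algHom_ext fun k => by simp [scaleX]; ring
  exact DFunLike.congr_fun h f

lemma scaleX_one (f : MvPolynomial ℕ+ F) : scaleX (fun _ => (1 : F)) f = f := by
  have h : scaleX (F := F) (fun _ => 1) = AlgHom.id F _ :=
    MvPolynomial.algHom_ext fun k => by simp [scaleX]
  simp [h]

lemma twoScale_comp (a b a' b' : ℕ+ → F) (Q : MvPolynomial (ℕ+ ⊕ ℕ+) F) :
    twoScale a b (twoScale a' b' Q)
      = twoScale (fun k => a k * a' k) (fun k => b k * b' k) Q := by
  have h : (twoScale a b).comp (twoScale a' b')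
      = twoScale (F := F) (fun k => a k * a' k) (fun k => b k * b' k) :=
    MvPolynomial.algHom_ext fun s => by cases s <;> (simp [twoScale]; ring)
  exact DFunLike.congr_fun h Q

lemma twoScale_rename_inl (a b : ℕ+ → F) (f : MvPolynomial ℕ+ F) :
    twoScale a b (rename Sum.inl f) = rename Sum.inl (scaleX a f) := by
  have h : (twoScale a b).comp ((rename Sum.inl).restrictScalars F)
      = ((rename Sum.inl).restrictScalars F).comp (scaleX a) := by
    apply MvPolynomial.algHom_ext; intro k; simp [twoScale, scaleX]
  exact DFunLike.congr_fun h f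

lemma twoScale_rename_inr (a b : ℕ+ → F) (f : MvPolynomial ℕ+ F) :
    twoScale a b (rename Sum.inr f) = rename Sum.inr (scaleX b f) := by
  have h : (twoScale a b).comp ((rename Sum.inr).restrictScalars F)
      = ((rename Sum.inr).restrictScalars F).comp (scaleX b) := by
    apply MvPolynomial.algHom_ext; intro k; simp [twoScale, scaleX]
  exact DFunLike.congr_fun h f

lemma split_monomial (d : (ℕ+ ⊕ ℕ+) →₀ ℕ) (a : F) :
    (monomial d a : MvPolynomial (ℕ+ ⊕ ℕ+) F)
      = rename Sum.inl (monomial (d.comapDomain Sum.inl Sum.inl_injective.injOn) a)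
        * rename Sum.inr (monomial (d.comapDomain Sum.inr Sum.inr_injective.injOn) 1) := by
  rw [rename_monomial, rename_monomial, monomial_mul, mul_one]
  have hd : Finsupp.mapDomain Sum.inl (d.comapDomain Sum.inl Sum.inl_injective.injOn)
      + Finsupp.mapDomain Sum.inr (d.comapDomain Sum.inr Sum.inr_injective.injOn) = d := by
    apply Finsupp.ext
    intro s
    cases s with
  | inl k =>
    simp [Finsupp.mapDomain_apply Sum.inl_injective,
      Finsupp.mapDomain_notin_range, Finsupp.comapDomain_apply]
  | inr k =>
    simp [Finsupp.mapDomain_apply Sum.inr_injective,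
      Finsupp.mapDomain_notin_range, Finsupp.comapDomain_apply]
  rw [hd]

lemma prod_ext (L₁ L₂ : MvPolynomial (ℕ+ ⊕ ℕ+) F → MvPolynomial (ℕ+ ⊕ ℕ+) F)
    (h₁ : ∀ p q, L₁ (p + q) = L₁ p + L₁ q) (h₂ : ∀ p q, L₂ (p + q) = L₂ p + L₂ q)
    (h : ∀ f g : MvPolynomial ℕ+ F,
      L₁ (rename Sum.inl f * rename Sum.inr g) = L₂ (rename Sum.inl f * rename Sum.inr g))
    (Q : MvPolynomial (ℕ+ ⊕ ℕ+) F) : L₁ Q = L₂ Q := by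
  induction Q using MvPolynomial.induction_on' with
  | monomial d a => rw [split_monomial d a]; exact h _ _
  | add p q hp hq => rw [h₁, h₂, hp, hq]

lemma twoScale_id (Q : MvPolynomial (ℕ+ ⊕ ℕ+) F) :
    twoScale (fun _ => (1 : F)) (fun _ => (1 : F)) Q = Q := by
  have h : twoScale (fun _ => (1 : F)) (fun _ => (1 : F)) = AlgHom.id F _ :=
    MvPolynomial.algHom_ext fun s => by cases s <;> simp [twoScale]
  simp [h]

lemma qsub_scaleX (q : F) (a : ℕ+ → F) (f : MvPolynomial ℕ+ F) :
    qsub q (scaleX a f) = twoScale a a (qsub q f) := by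
  have h : (qsub q).comp (scaleX a) = (twoScale a a).comp (qsub q) :=
    MvPolynomial.algHom_ext fun k => by simp [qsub, scaleX, twoScale]; ring
  exact DFunLike.congr_fun h f

lemma setY_scale (c ci : ℕ+ → F) (h : ∀ k, c k * ci k = 1) (Q : MvPolynomial (ℕ+ ⊕ ℕ+) F) :
    scaleX c (setY (twoScale ci (fun _ => 1) Q)) = setY (twoScale (fun _ => 1) c Q) := by
  have hh : ((scaleX c).comp setY).comp (twoScale ci (fun _ => 1))
      = setY.comp (twoScale (fun _ => 1) c) :=
    MvPolynomial.algHom_ext fun s => by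
      cases s with
      | inl k =>
        simp [setY, scaleX, twoScale]
        rw [← mul_assoc, ← C_mul, mul_comm (ci k), h, C_1, one_mul]
      | inr k => simp [setY, scaleX, twoScale]
  exact DFunLike.congr_fun hh Q

/-- Proposition 1.4: conjugation by the plethystic automorphism
F^t : p_k ↦ (1−t^k)p_k commutes with the q-twisting V ↦ Ṽ, where
Ṽ P = V^Y P[qX+(1−q)Y]|_{Y=X}: namely F^t ∘ Ṽ ∘ (F^t)⁻¹ = (F^t ∘ V ∘ (F^t)⁻¹)~.
V^Y and (F^t V (F^t)⁻¹)^Y are the Y-variable lifts of the respective operators,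
characterized on products f[X]·g[Y]. -/
theorem stmt_7 (q t : F)
    (V : MvPolynomial ℕ+ F →ₗ[F] MvPolynomial ℕ+ F)
    (Ft Fti : MvPolynomial ℕ+ F →ₐ[F] MvPolynomial ℕ+ F)
    (hFt : ∀ k : ℕ+, Ft (X k) = C (1 - t ^ (k : ℕ)) * X k)
    (hFti : ∀ P, Fti (Ft P) = P) (hFti' : ∀ P, Ft (Fti P) = P)
    (VY WY : MvPolynomial (ℕ+ ⊕ ℕ+) F →ₗ[F] MvPolynomial (ℕ+ ⊕ ℕ+) F)
    (hVY : ∀ f g : MvPolynomial ℕ+ F,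
      VY (rename Sum.inl f * rename Sum.inr g)
        = rename Sum.inl f * rename Sum.inr (V g))
    (hWY : ∀ f g : MvPolynomial ℕ+ F,
      WY (rename Sum.inl f * rename Sum.inr g)
        = rename Sum.inl f * rename Sum.inr (Ft (V (Fti g)))) :
    ∀ P : MvPolynomial ℕ+ F,
      Ft (setY (VY (qsub q (Fti P)))) = setY (WY (qsub q P)) := by
  intro P
  set c : ℕ+ → F := fun k => 1 - t ^ (k : ℕ) with hcdef
  have hc : ∀ k, c k ≠ 0 := by
    intro k h
    have h0 : Ft (X k) = 0 := by rw [hFt k]; show C (c k) * X k = 0; rw [h]; simp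
    have h1 := hFti (X k)
    rw [h0, map_zero] at h1
    exact X_ne_zero k h1.symm
  set ci : ℕ+ → F := fun k => (c k)⁻¹ with hcidef
  have hcci : ∀ k, c k * ci k = 1 := fun k => mul_inv_cancel₀ (hc k)
  have hcic : ∀ k, ci k * c k = 1 := fun k => inv_mul_cancel₀ (hc k)
  have hFtiX : ∀ k, Fti (X k) = C (ci k) * X k := by
    intro k
    have h1 : Fti (C (c k) * X k) = X k := by rw [← hFt k]; exact hFti (X k)
    rw [map_mul] at h1
    have h2 : Fti (C (c k)) = C (c k) := by
      simp [← MvPolynomial.algebraMap_eq]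
    rw [h2] at h1
    calc Fti (X k) = C (ci k) * (C (c k) * Fti (X k)) := by
          rw [← mul_assoc, ← C_mul, hcic, C_1, one_mul]
      _ = C (ci k) * X k := by rw [h1]
  have hFt_eq : ∀ f, Ft f = scaleX c f := by
    have h : Ft = scaleX c := MvPolynomial.algHom_ext fun k => by
      rw [hFt k]; simp only [scaleX, aeval_X]; rfl
    intro f; rw [h]
  have hFti_eq : ∀ f, Fti f = scaleX ci f := by
    have h : Fti = scaleX ci := MvPolynomial.algHom_ext fun k => by
      rw [hFtiX k]; simp only [scaleX, aeval_X]
    intro f; rw [h]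
  have hcic_fun : (fun k => ci k * c k) = fun _ : ℕ+ => (1 : F) := funext hcic
  have hcci_fun : (fun k => c k * ci k) = fun _ : ℕ+ => (1 : F) := funext hcci
  have stepC : ∀ Q, VY (twoScale ci (fun _ => 1) Q) = twoScale ci (fun _ => 1) (VY Q) := by
    intro Q
    refine prod_ext (fun Q => VY (twoScale ci (fun _ => 1) Q))
      (fun Q => twoScale ci (fun _ => 1) (VY Q))
      (fun p r => by simp) (fun p r => by simp) ?_ Q
    intro f g
    show VY (twoScale ci (fun _ => 1) _) = twoScale ci (fun _ => 1) (VY _)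
    rw [map_mul, twoScale_rename_inl, twoScale_rename_inr, scaleX_one, hVY, hVY,
      map_mul, twoScale_rename_inl, twoScale_rename_inr, scaleX_one]
  have stepE : ∀ Q, WY (twoScale (fun _ => 1) c Q) = twoScale (fun _ => 1) c (VY Q) := by
    intro Q
    refine prod_ext (fun Q => WY (twoScale (fun _ => 1) c Q))
      (fun Q => twoScale (fun _ => 1) c (VY Q))
      (fun p r => by simp) (fun p r => by simp) ?_ Q
    intro f g
    show WY (twoScale (fun _ => 1) c _) = twoScale (fun _ => 1) c (VY _)
    rw [map_mul, twoScale_rename_inl, twoScale_rename_inr, scaleX_one, hWY,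
      hFti_eq, scaleX_comp, hcic_fun, scaleX_one, hVY, map_mul,
      twoScale_rename_inl, twoScale_rename_inr, scaleX_one, hFt_eq]
  have h1 : qsub q (Fti P) = twoScale ci (fun _ => 1) (twoScale (fun _ => 1) ci (qsub q P)) := by
    rw [hFti_eq, qsub_scaleX, twoScale_comp,
      show (fun k : ℕ+ => ci k * 1) = ci from funext fun k => mul_one _,
      show (fun k : ℕ+ => (1 : F) * ci k) = ci from funext fun k => one_mul _]
  calc Ft (setY (VY (qsub q (Fti P))))
      = scaleX c (setY (VY (twoScale ci (fun _ => 1) (twoScale (fun _ => 1) ci (qsub q P))))) := by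
        rw [h1, hFt_eq]
    _ = scaleX c (setY (twoScale ci (fun _ => 1) (VY (twoScale (fun _ => 1) ci (qsub q P))))) := by
        rw [stepC]
    _ = setY (twoScale (fun _ => 1) c (VY (twoScale (fun _ => 1) ci (qsub q P)))) :=
        setY_scale c ci hcci _
    _ = setY (WY (twoScale (fun _ => 1) c (twoScale (fun _ => 1) ci (qsub q P)))) := by
        rw [stepE]
    _ = setY (WY (qsub q P)) := by
        rw [twoScale_comp]
        have he : (fun k : ℕ+ => (1 : F) * 1) = fun _ : ℕ+ => (1 : F) := by funext k; ring
        rw [he, hcci_fun, twoScale_id]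

end
end

section
/- The coefficient formula c_{ε,p}(q,t) = (1/((1/q;1/t)_{n−k})) · ∏_{i=1}^n (1 − t^{k+1−i} q^{p_i+ε_i−1}) has a well-defined limit as q → 0 given by c_{ε,p}(0,t) = (−1)^{n−k} t^{C(n−k,2)} ∏_{i: ε_i=0, p_i=0}(−t^{k+1−i}) ∏_{i: ε_i+p_i=1}(1−t^{k+1−i}) if Supp(p) ⊆ Supp(ε), and c_{ε,p}(0,t) = 0 otherwise. -/
noncomputable section

/-- The variable t, generating the field ℚ(t) = RatFunc ℚ. -/
def tF : RatFunc ℚ := RatFunc.X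

/-- The variable q, generating ℚ(t)(q) = ℚ(q,t). -/
def qF : RatFunc (RatFunc ℚ) := RatFunc.X

/-- The coefficient c_{ε,p}(q,t) = (1/((1/q;1/t)_{n−k})) · ∏_{i=1}^n (1 − t^{k+1−i} q^{p_i+ε_i−1}),
as a rational function in q over ℚ(t) (0-based index i : Fin n, so k+1−i becomes k−i). -/
def cEP (n k : ℕ) (ε p : Fin n → ℕ) : RatFunc (RatFunc ℚ) :=
  (∏ j ∈ Finset.range (n - k), (1 - qF⁻¹ * RatFunc.C (tF ^ (-(j : ℤ)))))⁻¹ *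
    ∏ i : Fin n,
      (1 - RatFunc.C (tF ^ ((k : ℤ) - (i : ℤ))) * qF ^ ((p i : ℤ) + (ε i : ℤ) - 1))

lemma eval_div_aux {K : Type*} [Field K] (f g : Polynomial K) (hg : g.eval 0 ≠ 0) :
    ((algebraMap (Polynomial K) (RatFunc K) f / algebraMap _ _ g).denom.eval 0 ≠ 0) ∧
    RatFunc.eval (RingHom.id K) 0 (algebraMap (Polynomial K) (RatFunc K) f / algebraMap _ _ g)
      = f.eval 0 / g.eval 0 := by
  have hg0 : g ≠ 0 := fun h => hg (by simp [h])
  set x := algebraMap (Polynomial K) (RatFunc K) f / algebraMap _ _ g with hx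
  have hdvd : x.denom ∣ g := RatFunc.denom_div_dvd f g
  have hd0 : x.denom.eval 0 ≠ 0 := by
    intro h
    obtain ⟨c, hc⟩ := hdvd
    exact hg (by rw [hc]; simp [h])
  refine ⟨hd0, ?_⟩
  have hdne : x.denom ≠ 0 := x.denom_ne_zero
  have key : f * x.denom = g * x.num := by
    apply RatFunc.algebraMap_injective K
    rw [map_mul, map_mul]
    have h1 : algebraMap (Polynomial K) (RatFunc K) x.num / algebraMap _ _ x.denom
        = algebraMap (Polynomial K) (RatFunc K) f / algebraMap _ _ g := by
      rw [RatFunc.num_div_denom x, hx]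
    rw [div_eq_div_iff (RatFunc.algebraMap_ne_zero hdne) (RatFunc.algebraMap_ne_zero hg0)] at h1
    linear_combination -h1
  have keval := congrArg (Polynomial.eval 0) key
  simp only [Polynomial.eval_mul] at keval
  have hrfl : RatFunc.eval (RingHom.id K) 0 x = x.num.eval 0 / x.denom.eval 0 := rfl
  rw [hrfl, div_eq_div_iff hd0 hg]
  linear_combination -keval

def Zset (n : ℕ) (ε p : Fin n → ℕ) : Finset (Fin n) :=
  Finset.univ.filter (fun i => ε i = 0 ∧ p i = 0)

def fpoly (n k : ℕ) (ε p : Fin n → ℕ) : Polynomial (RatFunc ℚ) :=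
  Polynomial.X ^ (n - k - (Zset n ε p).card)
    * (∏ i ∈ Zset n ε p, (Polynomial.X - Polynomial.C (tF ^ ((k:ℤ) - (i:ℤ)))))
    * ∏ i ∈ (Zset n ε p)ᶜ,
        (1 - Polynomial.C (tF ^ ((k:ℤ) - (i:ℤ))) * Polynomial.X ^ (p i + ε i - 1))

def gpoly (n k : ℕ) : Polynomial (RatFunc ℚ) :=
  ∏ j ∈ Finset.range (n - k), (Polynomial.X - Polynomial.C (tF ^ (-(j:ℤ))))

lemma cEP_eq (n k : ℕ) (ε p : Fin n → ℕ)
    (hz : (Zset n ε p).card ≤ n - k) :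
    cEP n k ε p = algebraMap _ _ (fpoly n k ε p) / algebraMap _ _ (gpoly n k) := by
  classical
  have hq : (qF : RatFunc (RatFunc ℚ)) ≠ 0 := RatFunc.X_ne_zero
  set m := n - k with hm
  set Z := Zset n ε p with hZ
  set A := algebraMap (Polynomial (RatFunc ℚ)) (RatFunc (RatFunc ℚ)) with hA
  -- denominator product
  have hden : ∏ j ∈ Finset.range m, (1 - qF⁻¹ * RatFunc.C (tF ^ (-(j : ℤ))))
      = (qF⁻¹) ^ m * A (gpoly n k) := by
    have h1 : ∀ j ∈ Finset.range m, 1 - qF⁻¹ * RatFunc.C (tF ^ (-(j:ℤ)))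
        = qF⁻¹ * (qF - RatFunc.C (tF ^ (-(j:ℤ)))) := by
      intro j _
      rw [mul_sub, inv_mul_cancel₀ hq]
    rw [Finset.prod_congr rfl h1, Finset.prod_mul_distrib, Finset.prod_const,
      Finset.card_range, gpoly, map_prod]
    congr 1
    refine Finset.prod_congr rfl fun j _ => ?_
    rw [map_sub, RatFunc.algebraMap_X, RatFunc.algebraMap_C, qF]
  -- main product split
  have hmain : (∏ i : Fin n,
        (1 - RatFunc.C (tF ^ ((k : ℤ) - (i : ℤ))) * qF ^ ((p i : ℤ) + (ε i : ℤ) - 1)))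
      = (qF⁻¹) ^ Z.card
        * A (∏ i ∈ Z, (Polynomial.X - Polynomial.C (tF ^ ((k:ℤ) - (i:ℤ)))))
        * A (∏ i ∈ Zᶜ,
            (1 - Polynomial.C (tF ^ ((k:ℤ) - (i:ℤ))) * Polynomial.X ^ (p i + ε i - 1))) := by
    rw [← Finset.prod_mul_prod_compl Z]
    congr 1
    · have h2 : ∀ i ∈ Z, (1 - RatFunc.C (tF ^ ((k : ℤ) - (i : ℤ))) * qF ^ ((p i : ℤ) + (ε i : ℤ) - 1))
          = qF⁻¹ * (qF - RatFunc.C (tF ^ ((k:ℤ) - (i:ℤ)))) := by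
        intro i hi
        rw [hZ, Zset, Finset.mem_filter] at hi
        obtain ⟨-, he, hp⟩ := hi
        have hex : ((p i : ℤ) + (ε i : ℤ) - 1) = -1 := by rw [he, hp]; norm_num
        rw [hex, zpow_neg_one, mul_sub, inv_mul_cancel₀ hq]
        ring
      rw [Finset.prod_congr rfl h2, Finset.prod_mul_distrib, Finset.prod_const, map_prod]
      congr 1
      refine Finset.prod_congr rfl fun i _ => ?_
      rw [map_sub, RatFunc.algebraMap_X, RatFunc.algebraMap_C, qF]
    · rw [map_prod]
      refine Finset.prod_congr rfl fun i hi => ?_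
      rw [hZ, Zset, Finset.mem_compl, Finset.mem_filter] at hi
      have hge : 1 ≤ p i + ε i := by
        by_contra hlt
        exact hi ⟨Finset.mem_univ i, by omega, by omega⟩
      have hcast : (p i : ℤ) + (ε i : ℤ) - 1 = ((p i + ε i - 1 : ℕ) : ℤ) := by omega
      rw [hcast, zpow_natCast, map_sub, map_one, map_mul, map_pow, RatFunc.algebraMap_X,
        RatFunc.algebraMap_C, qF]
  rw [cEP, hden, hmain, fpoly, map_mul, map_mul, map_pow, RatFunc.algebraMap_X, ← qF, ← hZ, ← hm,
    pow_sub₀ qF hq hz]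
  have hAg : A (gpoly n k) ≠ 0 := RatFunc.algebraMap_ne_zero (by
    rw [gpoly]
    exact Finset.prod_ne_zero_iff.mpr fun j _ => Polynomial.X_sub_C_ne_zero _)
  field_simp
  ring_nf
  rw [← mul_pow, ← mul_pow, mul_inv_cancel₀ hq, one_pow, one_pow]


lemma tF_ne : tF ≠ 0 := RatFunc.X_ne_zero

lemma gpoly_eval (n k : ℕ) :
    (gpoly n k).eval 0 = (-1)^(n-k) * (tF ^ ((n-k)*((n-k)-1)/2))⁻¹ := by
  rw [gpoly, Polynomial.eval_prod]
  have h1 : ∀ j ∈ Finset.range (n-k),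
      (Polynomial.X - Polynomial.C (tF ^ (-(j:ℤ)))).eval 0 = (-1) * (tF ^ j)⁻¹ := by
    intro j _
    simp [zpow_neg]
  rw [Finset.prod_congr rfl h1, Finset.prod_mul_distrib, Finset.prod_const, Finset.card_range,
    Finset.prod_inv_distrib, Finset.prod_pow_eq_pow_sum, Finset.sum_range_id]

lemma mydiv_helper {K : Type*} [Field K] (a b c : K) (m : ℕ) :
    a * b / ((-1)^m * c⁻¹) = (-1)^m * c * a * b := by
  rw [div_eq_mul_inv, mul_inv, inv_inv, ← inv_pow, inv_neg_one]
  ring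

/-- c_{ε,p}(q,t) is regular at q = 0 (its denominator does not vanish at
q = 0) and its value there is
(−1)^{n−k} t^{C(n−k,2)} ∏_{i: ε_i=0, p_i=0}(−t^{k+1−i}) ∏_{i: ε_i+p_i=1}(1−t^{k+1−i})
if Supp(p) ⊆ Supp(ε), and 0 otherwise. -/
theorem stmt_16 (n k : ℕ) (hkn : k ≤ n) (ε p : Fin n → ℕ) (hε : ∀ i, ε i ≤ 1)
    (hcard : (Finset.univ.filter (fun i : Fin n => ε i = 1)).card = k) :
    (cEP n k ε p).denom.eval 0 ≠ 0 ∧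
      RatFunc.eval (RingHom.id (RatFunc ℚ)) 0 (cEP n k ε p)
        = if ∀ i, p i ≠ 0 → ε i = 1 then
            (-1) ^ (n - k) * tF ^ ((n - k) * (n - k - 1) / 2) *
              (∏ i ∈ Finset.univ.filter (fun i : Fin n => ε i = 0 ∧ p i = 0),
                (-(tF ^ ((k : ℤ) - (i : ℤ))))) *
              ∏ i ∈ Finset.univ.filter (fun i : Fin n => ε i + p i = 1),
                (1 - tF ^ ((k : ℤ) - (i : ℤ)))
          else 0 := by
  have hfilter0 : (Finset.univ.filter (fun i : Fin n => ε i = 0)).card = n - k := by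
    have h := Finset.card_filter_add_card_filter_not
      (s := (Finset.univ : Finset (Fin n))) (p := fun i => ε i = 1)
    have he : (Finset.univ.filter (fun i : Fin n => ¬ ε i = 1))
        = Finset.univ.filter (fun i : Fin n => ε i = 0) := by
      apply Finset.filter_congr
      intro i _
      have := hε i
      omega
    rw [hcard, he, Finset.card_univ, Fintype.card_fin] at h
    omega
  have hsub : Zset n ε p ⊆ Finset.univ.filter (fun i : Fin n => ε i = 0) := by
    intro i hi
    rw [Zset, Finset.mem_filter] at hi
    exact Finset.mem_filter.mpr ⟨Finset.mem_univ i, hi.2.1⟩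
  have hzle : (Zset n ε p).card ≤ n - k := hfilter0 ▸ Finset.card_le_card hsub
  have hg0 : (gpoly n k).eval 0 ≠ 0 := by
    rw [gpoly_eval]
    exact mul_ne_zero (pow_ne_zero _ (by norm_num)) (inv_ne_zero (pow_ne_zero _ tF_ne))
  obtain ⟨hd, hv⟩ := eval_div_aux (fpoly n k ε p) (gpoly n k) hg0
  rw [← cEP_eq n k ε p hzle] at hd hv
  refine ⟨hd, ?_⟩
  rw [hv]
  by_cases h : ∀ i, p i ≠ 0 → ε i = 1
  · rw [if_pos h]
    have hZeq : Zset n ε p = Finset.univ.filter (fun i : Fin n => ε i = 0) := by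
      apply Finset.Subset.antisymm hsub
      intro i hi
      rw [Finset.mem_filter] at hi
      rw [Zset, Finset.mem_filter]
      refine ⟨Finset.mem_univ i, hi.2, ?_⟩
      by_contra hp
      have := h i hp
      omega
    have hzcard : (Zset n ε p).card = n - k := by rw [hZeq, hfilter0]
    have hf : (fpoly n k ε p).eval 0
        = (∏ i ∈ Finset.univ.filter (fun i : Fin n => ε i = 0 ∧ p i = 0),
              (-(tF ^ ((k : ℤ) - (i : ℤ)))))
          * ∏ i ∈ Finset.univ.filter (fun i : Fin n => ε i + p i = 1),
              (1 - tF ^ ((k : ℤ) - (i : ℤ))) := by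
      rw [fpoly, hzcard, Nat.sub_self, pow_zero, one_mul, Polynomial.eval_mul,
        Polynomial.eval_prod, Polynomial.eval_prod]
      congr 1
      · rw [Zset]
        refine Finset.prod_congr rfl fun i _ => ?_
        simp
      · rw [← Finset.prod_filter_mul_prod_filter_not ((Zset n ε p)ᶜ) (fun i => ε i + p i = 1)]
        have h2 : ∏ i ∈ ((Zset n ε p)ᶜ).filter (fun i => ¬ ε i + p i = 1),
            Polynomial.eval 0 (1 - Polynomial.C (tF ^ ((k:ℤ) - (i:ℤ)))
              * Polynomial.X ^ (p i + ε i - 1)) = 1 := by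
          apply Finset.prod_eq_one
          intro i hi
          rw [Finset.mem_filter, Finset.mem_compl, Zset, Finset.mem_filter] at hi
          have hge : 1 ≤ p i + ε i - 1 := by
            rcases hi with ⟨hi1, hi2⟩
            by_contra hlt
            rcases Nat.lt_or_ge (p i + ε i) 1 with hc | hc
            · exact hi1 ⟨Finset.mem_univ i, by omega, by omega⟩
            · exact hi2 (by omega)
          simp [zero_pow (by omega : p i + ε i - 1 ≠ 0)]
        rw [h2, mul_one]
        have h3 : ((Zset n ε p)ᶜ).filter (fun i => ε i + p i = 1)
            = Finset.univ.filter (fun i : Fin n => ε i + p i = 1) := by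
          ext i
          simp only [Finset.mem_filter, Finset.mem_compl, Zset, Finset.mem_univ, true_and]
          constructor
          · rintro ⟨-, h1⟩; exact h1
          · intro h1
            refine ⟨fun hc => ?_, h1⟩
            omega
        rw [h3]
        refine Finset.prod_congr rfl fun i hi => ?_
        rw [Finset.mem_filter] at hi
        have : p i + ε i - 1 = 0 := by omega
        simp [this]
    rw [hf, gpoly_eval, mydiv_helper]
  · rw [if_neg h]
    have hzlt : (Zset n ε p).card < n - k := by
      rcases lt_or_eq_of_le hzle with hlt | heq
      · exact hlt
      · exfalso
        apply h
        have hZeq : Zset n ε p = Finset.univ.filter (fun i : Fin n => ε i = 0) :=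
          Finset.eq_of_subset_of_card_le hsub (by rw [hfilter0, heq])
        intro i hpi
        by_contra hei
        have h0 : ε i = 0 := by have := hε i; omega
        have hmem : i ∈ Zset n ε p := by
          rw [hZeq, Finset.mem_filter]; exact ⟨Finset.mem_univ i, h0⟩
        rw [Zset, Finset.mem_filter] at hmem
        exact hpi hmem.2.2
    have hf0 : (fpoly n k ε p).eval 0 = 0 := by
      rw [fpoly]
      simp [zero_pow (by omega : n - k - (Zset n ε p).card ≠ 0)]
    rw [hf0, zero_div]

end
end
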